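/- Let q ≥ 3 be an integer and ε ≥ 0 a real number. Define α by α · log(1 + q^{−ε−1}) = log(1 + q^{−ε}), and set γ := 2 if q = 3 and γ := 1 + 2q^{−1} if q ≥ 4. Then: (a) for every integer z ≥ 3, q^z · (1 + q^{−1}) ≥ γ² · ((1 + q^{−ε})^{α/(α−1)} + 1/(1 − q^{−2})); (b) for every integer z ≥ 4, q^z · (1 + q^{−1})(1 + q^{−ε}) ≥ γ · q^{z−ε} + γ² · (1 + q^{−ε})^{α/(α−1)} · (2 + 1/(1 − q^{−2})). -/
import Mathlib


/-- `γ := 2` if `q = 3`, and `γ := 1 + 2q⁻¹` if `q ≥ 4`. -/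
noncomputable def gammaQ (q : ℕ) : ℝ := if q = 3 then 2 else 1 + 2 * (q : ℝ)⁻¹

private lemma aux_sq (u t : ℝ) (h0 : 0 ≤ u) (h3 : u ≤ t / 3) (h1 : t ≤ 1) (ht : 0 ≤ t) :
    (1 + u) ^ 2 ≤ 1 + t := by nlinarith

private lemma auxA (g B C P t qi : ℝ) (hg1 : 1 ≤ g) (hg2 : g ≤ 2) (hB0 : 0 < B)
    (hB : B ≤ (1 + t) ^ 2) (hC1 : 1 ≤ C) (hC2 : C ≤ 9/8) (ht0 : 0 < t) (ht1 : t ≤ 1)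
    (hP : 27 ≤ P) (hqi : 0 ≤ qi) :
    g ^ 2 * (B + C) ≤ P * (1 + qi) := by
  have hg : g ^ 2 ≤ 4 := by nlinarith
  have hB4 : B ≤ 4 := by nlinarith
  have h1 : g ^ 2 * (B + C) ≤ 4 * (B + C) := mul_le_mul_of_nonneg_right hg (by linarith)
  have h2 : 0 ≤ P * qi := mul_nonneg (by linarith) hqi
  nlinarith

private lemma auxB (g B C P t qi : ℝ) (hg1 : 1 ≤ g) (hg2 : g ≤ 2) (hB0 : 0 < B)
    (hB : B ≤ (1 + t) ^ 2) (hC1 : 1 ≤ C) (hC2 : C ≤ 9/8) (ht0 : 0 < t) (ht1 : t ≤ 1)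
    (hP : 81 ≤ P) (hPq : 27 ≤ P * qi) (hqi : 0 ≤ qi) :
    g * (P * t) + g ^ 2 * B * (2 + C) ≤ P * (1 + qi) * (1 + t) := by
  have hg : g ^ 2 ≤ 4 := by nlinarith
  have s1 : g ^ 2 * B ≤ 4 * (1 + t) ^ 2 := mul_le_mul hg hB hB0.le (by norm_num)
  have s2 : g ^ 2 * B * (2 + C) ≤ (4 * (1 + t) ^ 2) * (25/8) :=
    mul_le_mul s1 (by linarith) (by linarith) (by positivity)
  have s3 : (4 * (1 + t) ^ 2) * (25/8) ≤ 25 * (1 + t) := by nlinarith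
  have h1 : g * (P * t) ≤ 2 * (P * t) :=
    mul_le_mul_of_nonneg_right hg2 (mul_nonneg (by linarith) ht0.le)
  have h3 : 0 ≤ P * (1 - t) := mul_nonneg (by linarith) (by linarith)
  have h4 : 25 * (1 + t) ≤ (P * qi) * (1 + t) :=
    mul_le_mul_of_nonneg_right (by linarith) (by linarith)
  nlinarith [h1, s2, s3, h3, h4]

theorem stmt15 (q : ℕ) (hq : 3 ≤ q) (ε : ℝ) (hε : 0 ≤ ε) (α : ℝ)
    (hα : α * Real.log (1 + (q : ℝ) ^ (-ε - 1)) = Real.log (1 + (q : ℝ) ^ (-ε))) :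
    (∀ z : ℤ, 3 ≤ z →
      gammaQ q ^ 2 * ((1 + (q : ℝ) ^ (-ε)) ^ (α / (α - 1)) + 1 / (1 - (q : ℝ) ^ (-2 : ℤ)))
        ≤ (q : ℝ) ^ (z : ℝ) * (1 + (q : ℝ)⁻¹)) ∧
    (∀ z : ℤ, 4 ≤ z →
      gammaQ q * (q : ℝ) ^ ((z : ℝ) - ε)
          + gammaQ q ^ 2 * (1 + (q : ℝ) ^ (-ε)) ^ (α / (α - 1)) *
              (2 + 1 / (1 - (q : ℝ) ^ (-2 : ℤ)))
        ≤ (q : ℝ) ^ (z : ℝ) * (1 + (q : ℝ)⁻¹) * (1 + (q : ℝ) ^ (-ε))) := by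
  have hq3 : (3:ℝ) ≤ (q:ℝ) := by exact_mod_cast hq
  have hq0 : (0:ℝ) < (q:ℝ) := by linarith
  have hq1 : (1:ℝ) ≤ (q:ℝ) := by linarith
  set t : ℝ := (q:ℝ) ^ (-ε) with ht
  have ht0 : 0 < t := Real.rpow_pos_of_pos hq0 _
  have ht1 : t ≤ 1 := Real.rpow_le_one_of_one_le_of_nonpos hq1 (by linarith)
  have hu : (q:ℝ) ^ (-ε - 1) = t * (q:ℝ)⁻¹ := by
    rw [sub_eq_add_neg, Real.rpow_add hq0, Real.rpow_neg_one]
  have hu0 : 0 < t * (q:ℝ)⁻¹ := by positivity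
  have hqi : (q:ℝ)⁻¹ ≤ 3⁻¹ := inv_anti₀ (by norm_num) hq3
  have hu3 : t * (q:ℝ)⁻¹ ≤ t / 3 := by
    rw [div_eq_mul_inv]
    exact mul_le_mul_of_nonneg_left hqi ht0.le
  rw [hu] at hα
  have hLu0 : 0 < Real.log (1 + t * (q:ℝ)⁻¹) := Real.log_pos (by linarith)
  have hsq : (1 + t * (q:ℝ)⁻¹) ^ 2 ≤ 1 + t := aux_sq _ _ hu0.le hu3 ht1 ht0.le
  have hkey : 2 * Real.log (1 + t * (q:ℝ)⁻¹) ≤ Real.log (1 + t) := by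
    have h := Real.log_le_log (by positivity) hsq
    rw [Real.log_pow] at h
    push_cast at h
    linarith
  have hα2 : 2 ≤ α := by
    have h2 : 2 * Real.log (1 + t * (q:ℝ)⁻¹) ≤ α * Real.log (1 + t * (q:ℝ)⁻¹) := by
      rw [hα]; exact hkey
    exact le_of_mul_le_mul_right h2 hLu0
  have hβ : α / (α - 1) ≤ 2 := by
    rw [div_le_iff₀ (by linarith)]
    linarith
  set B : ℝ := (1 + t) ^ (α / (α - 1)) with hBdef
  have hB0 : 0 < B := Real.rpow_pos_of_pos (by linarith) _
  have hB : B ≤ (1 + t) ^ 2 := by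
    have h := Real.rpow_le_rpow_of_exponent_le (by linarith : (1:ℝ) ≤ 1 + t) hβ
    rwa [show ((2:ℝ)) = ((2:ℕ):ℝ) by norm_num, Real.rpow_natCast] at h
  -- the constant C
  have hq2 : (9:ℝ) ≤ (q:ℝ) ^ 2 := by nlinarith
  have hCz : (q:ℝ) ^ (-2:ℤ) = ((q:ℝ) ^ 2)⁻¹ := by
    rw [zpow_neg]
    norm_cast
  set C : ℝ := 1 / (1 - (q:ℝ) ^ (-2:ℤ)) with hCdef
  have hq2i : ((q:ℝ) ^ 2)⁻¹ ≤ 9⁻¹ := inv_anti₀ (by norm_num) hq2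
  have hq2i0 : 0 < ((q:ℝ) ^ 2)⁻¹ := by positivity
  have hC1 : 1 ≤ C := by
    rw [hCdef, hCz, le_div_iff₀ (by linarith)]
    linarith
  have hC2 : C ≤ 9/8 := by
    rw [hCdef, hCz, div_le_iff₀ (by linarith)]
    linarith
  -- gamma
  have hγ1 : 1 ≤ gammaQ q := by
    unfold gammaQ
    split
    · norm_num
    · have : (0:ℝ) ≤ 2 * (q:ℝ)⁻¹ := by positivity
      linarith
  have hγ2 : gammaQ q ≤ 2 := by
    unfold gammaQ
    split
    · norm_num
    · linarith
  have hqinv0 : (0:ℝ) ≤ (q:ℝ)⁻¹ := by positivity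
  have hq27 : (27:ℝ) ≤ (q:ℝ) ^ (3:ℤ) := by
    rw [show ((3:ℤ)) = ((3:ℕ):ℤ) by norm_num, zpow_natCast]
    calc (27:ℝ) = 3 ^ (3:ℕ) := by norm_num
      _ ≤ (q:ℝ) ^ (3:ℕ) := pow_le_pow_left₀ (by norm_num) hq3 3
  have hq81 : (81:ℝ) ≤ (q:ℝ) ^ (4:ℤ) := by
    rw [show ((4:ℤ)) = ((4:ℕ):ℤ) by norm_num, zpow_natCast]
    calc (81:ℝ) = 3 ^ (4:ℕ) := by norm_num
      _ ≤ (q:ℝ) ^ (4:ℕ) := pow_le_pow_left₀ (by norm_num) hq3 4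
  constructor
  · intro z hz
    have hP : (q:ℝ) ^ ((z:ℝ)) = (q:ℝ) ^ z := Real.rpow_intCast _ _
    have h27 : (27:ℝ) ≤ (q:ℝ) ^ z :=
      le_trans hq27 (zpow_le_zpow_right₀ hq1 hz)
    rw [hP]
    exact auxA _ _ _ _ _ _ hγ1 hγ2 hB0 hB hC1 hC2 ht0 ht1 h27 hqinv0
  · intro z hz
    have hP : (q:ℝ) ^ ((z:ℝ)) = (q:ℝ) ^ z := Real.rpow_intCast _ _
    have hPz : (q:ℝ) ^ ((z:ℝ) - ε) = (q:ℝ) ^ z * t := by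
      rw [sub_eq_add_neg, Real.rpow_add hq0, Real.rpow_intCast]
    have h27 : (27:ℝ) ≤ (q:ℝ) ^ (z - 1) :=
      le_trans hq27 (zpow_le_zpow_right₀ hq1 (by omega))
    have hPq : (27:ℝ) ≤ (q:ℝ) ^ z * (q:ℝ)⁻¹ := by
      rwa [← zpow_sub_one₀ (ne_of_gt hq0)]
    have hP81 : (81:ℝ) ≤ (q:ℝ) ^ z :=
      le_trans hq81 (zpow_le_zpow_right₀ hq1 hz)
    rw [hP, hPz]
    exact auxB _ _ _ _ _ _ hγ1 hγ2 hB0 hB hC1 hC2 ht0 ht1 hP81 hPq hqinv0
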